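/- arXiv:1101.2602 — 3 statements merged into one kernel-verified Lean document; each statement's English description precedes it below -/
import Mathlib

section
/- Let u < 0 and let h : (u, 0) → ℝ be continuous with ∫_u^0 |h(η)| (η − u)^{−1/2} dη < ∞. Define, for λ ∈ ℂ \ [u, +∞), G(λ) = (1/π) (u − λ)^{1/2} ∫_u^0 h(η) / ((η − λ) (η − u)^{1/2}) dη, where (u − λ)^{1/2} is the principal branch, analytic off [u, +∞) and positive for real λ < u. Then for every real λ > 0, lim_{δ→0+} [G(λ + iδ) + G(λ − iδ)] = 0. -/
open Filter Topology Set intervalIntegral MeasureTheory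

set_option maxHeartbeats 1000000

/-- the G-function
`G(λ) = (1/π)(u−λ)^{1/2} ∫_u^0 h(η)/((η−λ)(η−u)^{1/2}) dη` (principal branch of the
square root, cut along `[u, +∞)`) built from an integrable density `h` satisfies
`G_+(λ) + G_−(λ) → 0` on `(0, ∞)`, i.e. `lim_{δ→0+} [G(λ+iδ) + G(λ−iδ)] = 0`. -/
theorem G_function_jump_on_positive_axis
    (u : ℝ) (hu : u < 0) (h : ℝ → ℝ)
    (hcont : ContinuousOn h (Set.Ioo u 0))
    (hint : IntervalIntegrable (fun η => |h η| / Real.sqrt (η - u)) volume u 0)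
    (G : ℂ → ℂ)
    (hG : ∀ lam : ℂ, G lam = (1 / (Real.pi : ℂ)) * ((u : ℂ) - lam) ^ ((1 : ℂ) / 2) *
      ∫ η in u..(0 : ℝ), (h η : ℂ) / (((η : ℂ) - lam) * (Real.sqrt (η - u) : ℂ))) :
    ∀ lam : ℝ, 0 < lam →
      Tendsto (fun δ : ℝ => G (lam + δ * Complex.I) + G (lam - δ * Complex.I))
        (𝓝[>] 0) (𝓝 0) := by
  intro lam hlam
  have hIoc : Set.uIoc u (0 : ℝ) = Set.Ioc u 0 := Set.uIoc_of_le hu.le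
  -- measurability of h (as ℂ-valued) on the interval
  have hmeas0 : AEStronglyMeasurable (fun η => (h η : ℂ)) (volume.restrict (Set.Ioc u 0)) := by
    have h1 : AEStronglyMeasurable (fun η => (h η : ℂ)) (volume.restrict (Set.Ioo u 0)) :=
      (Complex.continuous_ofReal.comp_continuousOn hcont).aestronglyMeasurable measurableSet_Ioo
    rwa [Measure.restrict_congr_set Ioo_ae_eq_Ioc] at h1
  -- convergence of the integral factor
  have key : ∀ c : ℝ → ℂ, (∀ δ : ℝ, (c δ).re = lam) → Tendsto c (𝓝[>] 0) (𝓝 (lam : ℂ)) →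
      Tendsto (fun δ => ∫ η in u..(0 : ℝ),
          (h η : ℂ) / (((η : ℂ) - c δ) * (Real.sqrt (η - u) : ℂ))) (𝓝[>] 0)
        (𝓝 (∫ η in u..(0 : ℝ),
          (h η : ℂ) / (((η : ℂ) - (lam : ℂ)) * (Real.sqrt (η - u) : ℂ)))) := by
    intro c hre hc
    have hmeasF : ∀ᶠ δ : ℝ in 𝓝[>] 0, AEStronglyMeasurable
        (fun η : ℝ => (h η : ℂ) / (((η : ℂ) - c δ) * (Real.sqrt (η - u) : ℂ)))
        (volume.restrict (Set.uIoc u (0 : ℝ))) := by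
      filter_upwards with δ
      rw [hIoc]
      have hcden : Continuous fun η : ℝ => ((η : ℂ) - c δ) * (Real.sqrt (η - u) : ℂ) :=
        (Complex.continuous_ofReal.sub continuous_const).mul
          (Complex.continuous_ofReal.comp (Real.continuous_sqrt.comp
            (continuous_id.sub continuous_const)))
      exact (hmeas0.aemeasurable.div hcden.measurable.aemeasurable).aestronglyMeasurable
    have hbound : ∀ᶠ δ : ℝ in 𝓝[>] 0, ∀ᵐ η : ℝ, η ∈ Set.uIoc u (0 : ℝ) →
        ‖(h η : ℂ) / (((η : ℂ) - c δ) * (Real.sqrt (η - u) : ℂ))‖ ≤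
          |h η| / Real.sqrt (η - u) * lam⁻¹ := by
      filter_upwards with δ
      filter_upwards with η hη
      rw [hIoc] at hη
      have hηu : (0 : ℝ) < η - u := by linarith [hη.1]
      have hs : (0 : ℝ) < Real.sqrt (η - u) := Real.sqrt_pos.2 hηu
      have hden : lam ≤ ‖(η : ℂ) - c δ‖ := by
        have h1 : |((η : ℂ) - c δ).re| ≤ ‖(η : ℂ) - c δ‖ :=
          Complex.abs_re_le_norm _
        have h2 : ((η : ℂ) - c δ).re = η - lam := by
          simp [Complex.sub_re, hre δ]
        rw [h2] at h1
        have : lam ≤ |η - lam| := by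
          rw [abs_sub_comm, abs_of_nonneg (by linarith [hη.2])]
          linarith [hη.2]
        linarith
      have hnorm : ‖(h η : ℂ) / (((η : ℂ) - c δ) * (Real.sqrt (η - u) : ℂ))‖ =
          |h η| / (‖(η : ℂ) - c δ‖ * Real.sqrt (η - u)) := by
        simp [norm_div, norm_mul, Complex.norm_real,
          abs_of_nonneg hs.le]
      rw [hnorm, ← div_div]
      calc |h η| / ‖(η : ℂ) - c δ‖ / Real.sqrt (η - u)
          ≤ |h η| / lam / Real.sqrt (η - u) := by
            gcongr
        _ = |h η| / Real.sqrt (η - u) * lam⁻¹ := by ring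
    have hbint : IntervalIntegrable (fun η => |h η| / Real.sqrt (η - u) * lam⁻¹)
        volume u 0 := hint.mul_const _
    have hlim : ∀ᵐ η : ℝ, η ∈ Set.uIoc u (0 : ℝ) →
        Tendsto (fun δ : ℝ => (h η : ℂ) / (((η : ℂ) - c δ) * (Real.sqrt (η - u) : ℂ)))
          (𝓝[>] 0)
          (𝓝 ((h η : ℂ) / (((η : ℂ) - (lam : ℂ)) * (Real.sqrt (η - u) : ℂ)))) := by
      filter_upwards with η hη
      rw [hIoc] at hη
      have hne : ((η : ℂ) - (lam : ℂ)) * (Real.sqrt (η - u) : ℂ) ≠ 0 := by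
        apply mul_ne_zero
        · intro hc0
          have h3 : (η : ℂ) = (lam : ℂ) := by linear_combination hc0
          have h4 : η = lam := by exact_mod_cast h3
          linarith [hη.2]
        · simp only [ne_eq, Complex.ofReal_eq_zero]
          exact (Real.sqrt_pos.2 (by linarith [hη.1])).ne'
      exact Tendsto.div tendsto_const_nhds
        (((tendsto_const_nhds.sub hc).mul tendsto_const_nhds)) hne
    exact intervalIntegral.tendsto_integral_filter_of_dominated_convergence
      (fun η => |h η| / Real.sqrt (η - u) * lam⁻¹) hmeasF hbound hbint hlim
  set L := ∫ η in u..(0 : ℝ),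
      (h η : ℂ) / (((η : ℂ) - (lam : ℂ)) * (Real.sqrt (η - u) : ℂ)) with hL
  have hJp := key (fun δ => (lam : ℂ) + δ * Complex.I) (fun δ => by simp)
    (by simpa using (tendsto_const_nhds.add
      (((Complex.continuous_ofReal.tendsto 0).mono_left nhdsWithin_le_nhds).mul
        tendsto_const_nhds)))
  have hJm := key (fun δ => (lam : ℂ) - δ * Complex.I) (fun δ => by simp)
    (by simpa using (tendsto_const_nhds.sub
      (((Complex.continuous_ofReal.tendsto 0).mono_left nhdsWithin_le_nhds).mul
        tendsto_const_nhds)))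
  -- properties of the branch point
  have hre : ((u : ℂ) - (lam : ℂ)).re < 0 := by
    simp only [Complex.sub_re, Complex.ofReal_re]
    linarith
  have him : ((u : ℂ) - (lam : ℂ)).im = 0 := by simp
  have habs : ‖(u : ℂ) - (lam : ℂ)‖ = lam - u := by
    rw [← Complex.ofReal_sub, Complex.norm_real, Real.norm_eq_abs, abs_of_neg (by linarith)]
    ring
  -- limit of the square-root prefactor from the upper side of λ (lower side of the cut image)
  have hAp : Tendsto (fun δ : ℝ => ((u : ℂ) - ((lam : ℂ) + δ * Complex.I)) ^ ((1 : ℂ) / 2))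
      (𝓝[>] 0)
      (𝓝 (Complex.exp (((Real.log (lam - u) : ℂ) - Real.pi * Complex.I) * (1 / 2)))) := by
    have hmap : Tendsto (fun δ : ℝ => (u : ℂ) - ((lam : ℂ) + δ * Complex.I)) (𝓝[>] 0)
        (𝓝[{z : ℂ | z.im < 0}] ((u : ℂ) - (lam : ℂ))) := by
      apply tendsto_nhdsWithin_of_tendsto_nhds_of_eventually_within
      · simpa using (tendsto_const_nhds.sub (tendsto_const_nhds.add
          (((Complex.continuous_ofReal.tendsto 0).mono_left nhdsWithin_le_nhds).mul
            tendsto_const_nhds)))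
      · filter_upwards [self_mem_nhdsWithin] with δ hδ
        simp only [Set.mem_setOf_eq, Complex.sub_im, Complex.add_im, Complex.ofReal_im,
          Complex.mul_im, Complex.I_im, Complex.I_re, Complex.ofReal_re]
        simp only [Set.mem_Ioi] at hδ
        nlinarith
    have hlog := (Complex.tendsto_log_nhdsWithin_im_neg_of_re_neg_of_im_zero hre him).comp hmap
    rw [habs] at hlog
    have hexp := (Complex.continuous_exp.tendsto _).comp (hlog.mul
      (tendsto_const_nhds (x := ((1 : ℂ) / 2))))
    apply hexp.congr'
    filter_upwards [self_mem_nhdsWithin] with δ hδ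
    simp only [Set.mem_Ioi] at hδ
    have hz : (u : ℂ) - ((lam : ℂ) + δ * Complex.I) ≠ 0 := by
      intro h0
      have h1 := congrArg Complex.im h0
      simp at h1
      linarith
    simp only [Function.comp]
    rw [Complex.cpow_def_of_ne_zero hz]
  -- limit from the lower side of λ (upper side of the cut image)
  have hAm : Tendsto (fun δ : ℝ => ((u : ℂ) - ((lam : ℂ) - δ * Complex.I)) ^ ((1 : ℂ) / 2))
      (𝓝[>] 0)
      (𝓝 (Complex.exp (((Real.log (lam - u) : ℂ) + Real.pi * Complex.I) * (1 / 2)))) := by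
    have hmap : Tendsto (fun δ : ℝ => (u : ℂ) - ((lam : ℂ) - δ * Complex.I)) (𝓝[>] 0)
        (𝓝[{z : ℂ | 0 ≤ z.im}] ((u : ℂ) - (lam : ℂ))) := by
      apply tendsto_nhdsWithin_of_tendsto_nhds_of_eventually_within
      · simpa using (tendsto_const_nhds.sub (tendsto_const_nhds.sub
          (((Complex.continuous_ofReal.tendsto 0).mono_left nhdsWithin_le_nhds).mul
            tendsto_const_nhds)))
      · filter_upwards [self_mem_nhdsWithin] with δ hδ
        simp only [Set.mem_setOf_eq, Complex.sub_im, Complex.ofReal_im, Complex.mul_im,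
          Complex.I_im, Complex.I_re, Complex.ofReal_re]
        simp only [Set.mem_Ioi] at hδ
        nlinarith
    have hlog :=
      (Complex.tendsto_log_nhdsWithin_im_nonneg_of_re_neg_of_im_zero hre him).comp hmap
    rw [habs] at hlog
    have hexp := (Complex.continuous_exp.tendsto _).comp (hlog.mul
      (tendsto_const_nhds (x := ((1 : ℂ) / 2))))
    apply hexp.congr'
    filter_upwards [self_mem_nhdsWithin] with δ hδ
    simp only [Set.mem_Ioi] at hδ
    have hz : (u : ℂ) - ((lam : ℂ) - δ * Complex.I) ≠ 0 := by
      intro h0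
      have h1 := congrArg Complex.im h0
      simp at h1
      linarith
    simp only [Function.comp]
    rw [Complex.cpow_def_of_ne_zero hz]
  -- assemble
  have hsum : Tendsto (fun δ : ℝ => G (lam + δ * Complex.I) + G (lam - δ * Complex.I))
      (𝓝[>] 0)
      (𝓝 ((1 / (Real.pi : ℂ)) *
            Complex.exp (((Real.log (lam - u) : ℂ) - Real.pi * Complex.I) * (1 / 2)) * L +
          (1 / (Real.pi : ℂ)) *
            Complex.exp (((Real.log (lam - u) : ℂ) + Real.pi * Complex.I) * (1 / 2)) * L)) := by
    simp only [hG]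
    exact ((tendsto_const_nhds.mul hAp).mul hJp).add ((tendsto_const_nhds.mul hAm).mul hJm)
  have hval : (1 / (Real.pi : ℂ)) *
        Complex.exp (((Real.log (lam - u) : ℂ) - Real.pi * Complex.I) * (1 / 2)) * L +
      (1 / (Real.pi : ℂ)) *
        Complex.exp (((Real.log (lam - u) : ℂ) + Real.pi * Complex.I) * (1 / 2)) * L = 0 := by
    have heq : ((Real.log (lam - u) : ℂ) + Real.pi * Complex.I) * (1 / 2) =
        ((Real.log (lam - u) : ℂ) - Real.pi * Complex.I) * (1 / 2) + Real.pi * Complex.I := by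
      ring
    rw [heq, Complex.exp_add, Complex.exp_pi_mul_I]
    ring
  rwa [hval] at hsum
end

section
/- Let u < 0 be real and define the 2×2 matrix-valued function P^∞(λ) = (−λ)^{1/4} · diag((u − λ)^{−1/4}, (u − λ)^{1/4}) · [[1, 1], [i, −i]] for λ ∈ ℂ \ [u, +∞), where (−λ)^{1/4} is the principal branch with cut [0, +∞) and (u − λ)^{±1/4} the principal branch with cut [u, +∞). Then P^∞ is analytic on ℂ \ [u, +∞), and its boundary values P^∞_±(λ) = lim_{δ→0+} P^∞(λ ± iδ) satisfy P^∞_+(λ) = P^∞_−(λ) σ₁ for λ ∈ (0, +∞) and P^∞_+(λ) = i P^∞_−(λ) σ₁ for λ ∈ (u, 0), where σ₁ = [[0,1],[1,0]]. -/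
open Filter Topology Set Matrix

/-- The outside parametrix
`P^∞(λ) = (−λ)^{1/4} (u − λ)^{−σ₃/4} [[1,1],[i,−i]]`, with principal branches
(`(−λ)^{1/4}` cut along `[0,∞)`, `(u−λ)^{±1/4}` cut along `[u,∞)`). -/
noncomputable def Pinf (u : ℝ) (lam : ℂ) : Matrix (Fin 2) (Fin 2) ℂ :=
  ((-lam) ^ ((1 : ℂ) / 4)) •
    (Matrix.of ![![((u : ℂ) - lam) ^ (-(1 / 4) : ℂ), 0],
                 ![0, ((u : ℂ) - lam) ^ ((1 : ℂ) / 4)]] *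
     Matrix.of ![![1, 1], ![Complex.I, -Complex.I]])

/-- The Pauli matrix `σ₁`. -/
def sigma1 : Matrix (Fin 2) (Fin 2) ℂ := Matrix.of ![![0, 1], ![1, 0]]

section Aux
open Complex Real

lemma tendsto_base_upper (x : ℝ) :
    Tendsto (fun δ : ℝ => (x : ℂ) + δ * Complex.I) (𝓝[>] 0)
      (𝓝[{z : ℂ | 0 ≤ z.im}] (x : ℂ)) := by
  rw [tendsto_nhdsWithin_iff]
  constructor
  · have h : Tendsto (fun δ : ℝ => (x : ℂ) + δ * Complex.I) (𝓝 0) (𝓝 ((x:ℂ) + (0:ℝ) * Complex.I)) := by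
      exact (tendsto_const_nhds.add ((Complex.continuous_ofReal.tendsto 0).mul tendsto_const_nhds))
    simpa using h.mono_left nhdsWithin_le_nhds
  · filter_upwards [self_mem_nhdsWithin] with δ (hδ : 0 < δ)
    simp [mem_setOf_eq, hδ.le]

lemma tendsto_base_lower (x : ℝ) :
    Tendsto (fun δ : ℝ => (x : ℂ) - δ * Complex.I) (𝓝[>] 0)
      (𝓝[{z : ℂ | z.im < 0}] (x : ℂ)) := by
  rw [tendsto_nhdsWithin_iff]
  constructor
  · have h : Tendsto (fun δ : ℝ => (x : ℂ) - δ * Complex.I) (𝓝 0) (𝓝 ((x:ℂ) - (0:ℝ) * Complex.I)) := by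
      exact (tendsto_const_nhds.sub ((Complex.continuous_ofReal.tendsto 0).mul tendsto_const_nhds))
    simpa using h.mono_left nhdsWithin_le_nhds
  · filter_upwards [self_mem_nhdsWithin] with δ (hδ : 0 < δ)
    simp [mem_setOf_eq, hδ]

lemma cpow_upper (x : ℝ) (hx : x < 0) (w : ℂ) :
    Tendsto (fun δ : ℝ => ((x : ℂ) + δ * Complex.I) ^ w) (𝓝[>] 0)
      (𝓝 (Complex.exp ((Real.log (-x) + π * Complex.I) * w))) := by
  have hlog := (Complex.tendsto_log_nhdsWithin_im_nonneg_of_re_neg_of_im_zero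
    (by simpa using hx) (by simp)).comp (tendsto_base_upper x)
  have habs : ‖(x : ℂ)‖ = -x := by
    rw [Complex.norm_real, Real.norm_eq_abs, abs_of_neg hx]
  rw [habs] at hlog
  have h := (Complex.continuous_exp.tendsto _).comp (hlog.mul (tendsto_const_nhds (x := w)))
  refine h.congr' ?_
  filter_upwards [self_mem_nhdsWithin] with δ (hδ : 0 < δ)
  have hz : (x : ℂ) + δ * Complex.I ≠ 0 := by
    intro hc
    have : ((x : ℂ) + δ * Complex.I).im = 0 := by rw [hc]; simp
    simp at this
    exact hδ.ne' this
  simp [Function.comp, Complex.cpow_def_of_ne_zero hz]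

lemma cpow_lower (x : ℝ) (hx : x < 0) (w : ℂ) :
    Tendsto (fun δ : ℝ => ((x : ℂ) - δ * Complex.I) ^ w) (𝓝[>] 0)
      (𝓝 (Complex.exp ((Real.log (-x) - π * Complex.I) * w))) := by
  have hlog := (Complex.tendsto_log_nhdsWithin_im_neg_of_re_neg_of_im_zero
    (by simpa using hx) (by simp)).comp (tendsto_base_lower x)
  have habs : ‖(x : ℂ)‖ = -x := by
    rw [Complex.norm_real, Real.norm_eq_abs, abs_of_neg hx]
  rw [habs] at hlog
  have h := (Complex.continuous_exp.tendsto _).comp (hlog.mul (tendsto_const_nhds (x := w)))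
  refine h.congr' ?_
  filter_upwards [self_mem_nhdsWithin] with δ (hδ : 0 < δ)
  have hz : (x : ℂ) - δ * Complex.I ≠ 0 := by
    intro hc
    have : ((x : ℂ) - δ * Complex.I).im = 0 := by rw [hc]; simp
    simp at this
    exact hδ.ne' this
  simp [Function.comp, Complex.cpow_def_of_ne_zero hz]

noncomputable def Fmat (c a b : ℂ) : Matrix (Fin 2) (Fin 2) ℂ :=
  c • (Matrix.of ![![a, 0], ![0, b]] * Matrix.of ![![1, 1], ![Complex.I, -Complex.I]])

lemma Pinf_eq_Fmat (u : ℝ) (lam : ℂ) :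
    Pinf u lam = Fmat ((-lam) ^ ((1 : ℂ) / 4)) (((u : ℂ) - lam) ^ (-(1 / 4) : ℂ))
      (((u : ℂ) - lam) ^ ((1 : ℂ) / 4)) := rfl

lemma Fmat_apply (c a b : ℂ) :
    Fmat c a b = Matrix.of ![![c * a, c * a], ![c * b * Complex.I, -(c * b * Complex.I)]] := by
  ext i j
  fin_cases i <;> fin_cases j <;>
    simp [Fmat, Matrix.mul_apply, Fin.sum_univ_two] <;> ring

lemma Fmat_continuous : Continuous (fun p : ℂ × ℂ × ℂ => Fmat p.1 p.2.1 p.2.2) := by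
  apply Continuous.smul continuous_fst
  apply Continuous.matrix_mul _ continuous_const
  apply continuous_matrix
  intro i j
  fin_cases i <;> fin_cases j <;> simp <;> fun_prop

lemma tendsto_Fmat {c a b : ℝ → ℂ} {c0 a0 b0 : ℂ}
    (hc : Tendsto c (𝓝[>] 0) (𝓝 c0)) (ha : Tendsto a (𝓝[>] 0) (𝓝 a0))
    (hb : Tendsto b (𝓝[>] 0) (𝓝 b0)) :
    Tendsto (fun δ : ℝ => Fmat (c δ) (a δ) (b δ)) (𝓝[>] 0) (𝓝 (Fmat c0 a0 b0)) := by
  have htriple : Tendsto (fun δ : ℝ => (c δ, a δ, b δ)) (𝓝[>] 0) (𝓝 (c0, a0, b0)) := by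
    rw [nhds_prod_eq, nhds_prod_eq]
    exact hc.prodMk (ha.prodMk hb)
  exact (Fmat_continuous.tendsto (c0, a0, b0)).comp htriple

lemma hpi2 : Complex.exp (↑π * Complex.I / 2) = Complex.I := by
  rw [show (↑π * Complex.I / 2 : ℂ) = (π / 2 : ℝ) * Complex.I by push_cast; ring,
    Complex.exp_mul_I]
  simp

lemma hmpi2 : Complex.exp (-(↑π * Complex.I) / 2) = -Complex.I := by
  rw [show (-(↑π * Complex.I) / 2 : ℂ) = -(↑π * Complex.I / 2) by ring, Complex.exp_neg, hpi2,
    Complex.inv_I]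

lemma keyI (L1 L2 : ℝ) :
    Complex.exp ((↑L1 - ↑π * Complex.I) * 4⁻¹) * Complex.exp ((↑L2 - ↑π * Complex.I) * 4⁻¹) * Complex.I
      = -(Complex.exp ((↑L1 + ↑π * Complex.I) * 4⁻¹) * Complex.exp ((↑L2 + ↑π * Complex.I) * 4⁻¹) * Complex.I) := by
  rw [show Complex.exp ((↑L1 - ↑π * Complex.I) * 4⁻¹) * Complex.exp ((↑L2 - ↑π * Complex.I) * 4⁻¹)
        = Complex.exp (((L1 : ℂ) + L2) * 4⁻¹) * Complex.exp (-(↑π * Complex.I) / 2) by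
        rw [← Complex.exp_add, ← Complex.exp_add]; congr 1; ring,
    show Complex.exp ((↑L1 + ↑π * Complex.I) * 4⁻¹) * Complex.exp ((↑L2 + ↑π * Complex.I) * 4⁻¹)
        = Complex.exp (((L1 : ℂ) + L2) * 4⁻¹) * Complex.exp (↑π * Complex.I / 2) by
        rw [← Complex.exp_add, ← Complex.exp_add]; congr 1; ring,
    hmpi2, hpi2]
  rw [mul_assoc, mul_assoc, Complex.I_mul_I]
  ring_nf
  rw [Complex.I_sq]
  ring

lemma jump1 (L1 L2 : ℝ) :
    Fmat (Complex.exp (((L1 : ℂ) - ↑π * Complex.I) * (1 / 4)))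
        (Complex.exp (((L2 : ℂ) - ↑π * Complex.I) * (-(1 / 4))))
        (Complex.exp (((L2 : ℂ) - ↑π * Complex.I) * (1 / 4)))
      = Fmat (Complex.exp (((L1 : ℂ) + ↑π * Complex.I) * (1 / 4)))
        (Complex.exp (((L2 : ℂ) + ↑π * Complex.I) * (-(1 / 4))))
        (Complex.exp (((L2 : ℂ) + ↑π * Complex.I) * (1 / 4))) * sigma1 := by
  ext i j
  fin_cases i <;> fin_cases j <;>
    simp [Fmat_apply, sigma1, Matrix.mul_apply, Fin.sum_univ_two]
  all_goals first
  | (rw [← Complex.exp_add, ← Complex.exp_add]; exact congrArg Complex.exp (by ring))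
  | (rw [keyI L1 L2] <;> ring)

lemma keyA (L2 : ℝ) :
    Complex.exp (-((↑L2 - ↑π * Complex.I) * 4⁻¹))
      = Complex.I * Complex.exp (-((↑L2 + ↑π * Complex.I) * 4⁻¹)) := by
  rw [show Complex.I * Complex.exp (-((↑L2 + ↑π * Complex.I) * 4⁻¹))
      = Complex.exp (↑π * Complex.I / 2 + -((↑L2 + ↑π * Complex.I) * 4⁻¹)) by
    rw [Complex.exp_add, hpi2]]
  exact congrArg Complex.exp (by ring)

lemma keyB (L2 : ℝ) :
    Complex.exp ((↑L2 - ↑π * Complex.I) * 4⁻¹) * Complex.I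
      = Complex.exp ((↑L2 + ↑π * Complex.I) * 4⁻¹) := by
  rw [show Complex.exp ((↑L2 - ↑π * Complex.I) * 4⁻¹) * Complex.I
      = Complex.exp ((↑L2 - ↑π * Complex.I) * 4⁻¹ + ↑π * Complex.I / 2) by
    rw [Complex.exp_add, hpi2]]
  exact congrArg Complex.exp (by ring)

lemma jump2 (c : ℂ) (L2 : ℝ) :
    Fmat c (Complex.exp (((L2 : ℂ) - ↑π * Complex.I) * (-(1 / 4))))
        (Complex.exp (((L2 : ℂ) - ↑π * Complex.I) * (1 / 4)))
      = Complex.I • (Fmat c (Complex.exp (((L2 : ℂ) + ↑π * Complex.I) * (-(1 / 4))))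
        (Complex.exp (((L2 : ℂ) + ↑π * Complex.I) * (1 / 4))) * sigma1) := by
  ext i j
  fin_cases i <;> fin_cases j <;>
    simp [Fmat_apply, sigma1, Matrix.mul_apply, Fin.sum_univ_two]
  all_goals first
  | (rw [keyA L2]; ring)
  | (rw [mul_assoc, keyB L2]
     first
     | linear_combination (c * Complex.exp (((L2 : ℂ) + ↑π * Complex.I) * 4⁻¹)) * Complex.I_mul_I
     | linear_combination (-(c * Complex.exp (((L2 : ℂ) + ↑π * Complex.I) * 4⁻¹))) * Complex.I_mul_I)

end Aux

/-- `P^∞` is analytic on `ℂ \ [u, +∞)` and its boundary values satisfy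
`P^∞_+ = P^∞_− σ₁` on `(0, ∞)` and `P^∞_+ = i P^∞_− σ₁` on `(u, 0)`. -/
theorem outside_parametrix_jumps (u : ℝ) (hu : u < 0) :
    (∀ i j : Fin 2, AnalyticOnNhd ℂ (fun lam => Pinf u lam i j)
      {z : ℂ | z.im ≠ 0 ∨ z.re < u}) ∧
    (∀ lam : ℝ, 0 < lam →
      ∃ Pp Pm : Matrix (Fin 2) (Fin 2) ℂ,
        Tendsto (fun δ : ℝ => Pinf u ((lam : ℂ) + δ * Complex.I)) (𝓝[>] 0) (𝓝 Pp) ∧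
        Tendsto (fun δ : ℝ => Pinf u ((lam : ℂ) - δ * Complex.I)) (𝓝[>] 0) (𝓝 Pm) ∧
        Pp = Pm * sigma1) ∧
    (∀ lam : ℝ, u < lam → lam < 0 →
      ∃ Pp Pm : Matrix (Fin 2) (Fin 2) ℂ,
        Tendsto (fun δ : ℝ => Pinf u ((lam : ℂ) + δ * Complex.I)) (𝓝[>] 0) (𝓝 Pp) ∧
        Tendsto (fun δ : ℝ => Pinf u ((lam : ℂ) - δ * Complex.I)) (𝓝[>] 0) (𝓝 Pm) ∧
        Pp = Complex.I • (Pm * sigma1)) := by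
  obtain ⟨hpart1, hpart2, hpart3⟩ :
      (∀ i j : Fin 2, AnalyticOnNhd ℂ (fun lam => Pinf u lam i j)
        {z : ℂ | z.im ≠ 0 ∨ z.re < u}) ∧ True ∧ True := by
    refine ⟨?_, trivial, trivial⟩
    intro i j z hz
    have hm1 : -z ∈ Complex.slitPlane := by
      rcases hz with h | h
      · exact Or.inr (by simpa using h)
      · exact Or.inl (by simp; linarith)
    have hm2 : (u : ℂ) - z ∈ Complex.slitPlane := by
      rcases hz with h | h
      · exact Or.inr (by simpa using h)
      · exact Or.inl (by simp [Complex.sub_re]; linarith)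
    have hc : AnalyticAt ℂ (fun lam : ℂ => (-lam) ^ ((1 : ℂ) / 4)) z :=
      (analyticAt_id.neg).cpow analyticAt_const hm1
    have ha : AnalyticAt ℂ (fun lam : ℂ => ((u : ℂ) - lam) ^ (-(1 / 4) : ℂ)) z :=
      (analyticAt_const.sub analyticAt_id).cpow analyticAt_const hm2
    have hb : AnalyticAt ℂ (fun lam : ℂ => ((u : ℂ) - lam) ^ ((1 : ℂ) / 4)) z :=
      (analyticAt_const.sub analyticAt_id).cpow analyticAt_const hm2
    fin_cases i <;> fin_cases j <;>
      simp only [Pinf_eq_Fmat, Fmat_apply, Matrix.of_apply, Matrix.cons_val', Matrix.cons_val_zero,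
        Matrix.cons_val_one, Matrix.head_cons, Matrix.empty_val', Matrix.cons_val_fin_one,
        Matrix.head_fin_const] <;>
      first
      | exact hc.mul ha
      | exact (hc.mul hb).mul analyticAt_const
      | exact ((hc.mul hb).mul analyticAt_const).neg
  clear hpart2 hpart3
  refine ⟨hpart1, ?_, ?_⟩
  · -- jump on (0, ∞)
    intro lam hlam
    have hneg : -lam < 0 := by linarith
    have hul : u - lam < 0 := by linarith
    refine ⟨Fmat (Complex.exp ((↑(Real.log lam) - (Real.pi : ℂ) * Complex.I) * (1 / 4)))
        (Complex.exp ((↑(Real.log (lam - u)) - (Real.pi : ℂ) * Complex.I) * (-(1 / 4))))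
        (Complex.exp ((↑(Real.log (lam - u)) - (Real.pi : ℂ) * Complex.I) * (1 / 4))),
      Fmat (Complex.exp ((↑(Real.log lam) + (Real.pi : ℂ) * Complex.I) * (1 / 4)))
        (Complex.exp ((↑(Real.log (lam - u)) + (Real.pi : ℂ) * Complex.I) * (-(1 / 4))))
        (Complex.exp ((↑(Real.log (lam - u)) + (Real.pi : ℂ) * Complex.I) * (1 / 4))), ?_, ?_,
      jump1 (Real.log lam) (Real.log (lam - u))⟩
    · -- approach from above
      have h1 := cpow_lower (-lam) hneg ((1 : ℂ) / 4)
      rw [neg_neg] at h1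
      have h2 := cpow_lower (u - lam) hul (-(1 / 4) : ℂ)
      rw [neg_sub] at h2
      have h3 := cpow_lower (u - lam) hul ((1 : ℂ) / 4)
      rw [neg_sub] at h3
      exact tendsto_Fmat
        (h1.congr fun δ => congrArg (· ^ ((1 : ℂ) / 4)) (by push_cast; ring))
        (h2.congr fun δ => congrArg (· ^ (-(1 / 4) : ℂ)) (by push_cast; ring))
        (h3.congr fun δ => congrArg (· ^ ((1 : ℂ) / 4)) (by push_cast; ring))
    · -- approach from below
      have h1 := cpow_upper (-lam) hneg ((1 : ℂ) / 4)
      rw [neg_neg] at h1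
      have h2 := cpow_upper (u - lam) hul (-(1 / 4) : ℂ)
      rw [neg_sub] at h2
      have h3 := cpow_upper (u - lam) hul ((1 : ℂ) / 4)
      rw [neg_sub] at h3
      exact tendsto_Fmat
        (h1.congr fun δ => congrArg (· ^ ((1 : ℂ) / 4)) (by push_cast; ring))
        (h2.congr fun δ => congrArg (· ^ (-(1 / 4) : ℂ)) (by push_cast; ring))
        (h3.congr fun δ => congrArg (· ^ ((1 : ℂ) / 4)) (by push_cast; ring))
  · -- jump on (u, 0)
    intro lam hul' hlam
    have hul : u - lam < 0 := by linarith
    have hmem : ((-lam : ℝ) : ℂ) ∈ Complex.slitPlane := Or.inl (by simp; linarith)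
    have hcontbase : ∀ s : ℝ, Continuous (fun δ : ℝ => -((lam : ℂ) + (s * δ : ℝ) * Complex.I)) := by
      intro s; fun_prop
    have hcup : Tendsto (fun δ : ℝ => (-((lam : ℂ) + ↑δ * Complex.I)) ^ ((1 : ℂ) / 4)) (𝓝[>] 0)
        (𝓝 (((-lam : ℝ) : ℂ) ^ ((1 : ℂ) / 4))) := by
      refine ((continuousAt_cpow_const hmem).tendsto).comp ?_
      have h : Continuous (fun δ : ℝ => -((lam : ℂ) + ↑δ * Complex.I)) := by fun_prop
      have := (h.tendsto 0).mono_left (nhdsWithin_le_nhds (s := Set.Ioi (0:ℝ)))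
      simpa using this
    have hcdown : Tendsto (fun δ : ℝ => (-((lam : ℂ) - ↑δ * Complex.I)) ^ ((1 : ℂ) / 4)) (𝓝[>] 0)
        (𝓝 (((-lam : ℝ) : ℂ) ^ ((1 : ℂ) / 4))) := by
      refine ((continuousAt_cpow_const hmem).tendsto).comp ?_
      have h : Continuous (fun δ : ℝ => -((lam : ℂ) - ↑δ * Complex.I)) := by fun_prop
      have := (h.tendsto 0).mono_left (nhdsWithin_le_nhds (s := Set.Ioi (0:ℝ)))
      simpa using this
    refine ⟨Fmat (((-lam : ℝ) : ℂ) ^ ((1 : ℂ) / 4))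
        (Complex.exp ((↑(Real.log (lam - u)) - (Real.pi : ℂ) * Complex.I) * (-(1 / 4))))
        (Complex.exp ((↑(Real.log (lam - u)) - (Real.pi : ℂ) * Complex.I) * (1 / 4))),
      Fmat (((-lam : ℝ) : ℂ) ^ ((1 : ℂ) / 4))
        (Complex.exp ((↑(Real.log (lam - u)) + (Real.pi : ℂ) * Complex.I) * (-(1 / 4))))
        (Complex.exp ((↑(Real.log (lam - u)) + (Real.pi : ℂ) * Complex.I) * (1 / 4))), ?_, ?_,
      jump2 _ (Real.log (lam - u))⟩
    · have h2 := cpow_lower (u - lam) hul (-(1 / 4) : ℂ)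
      rw [neg_sub] at h2
      have h3 := cpow_lower (u - lam) hul ((1 : ℂ) / 4)
      rw [neg_sub] at h3
      exact tendsto_Fmat hcup
        (h2.congr fun δ => congrArg (· ^ (-(1 / 4) : ℂ)) (by push_cast; ring))
        (h3.congr fun δ => congrArg (· ^ ((1 : ℂ) / 4)) (by push_cast; ring))
    · have h2 := cpow_upper (u - lam) hul (-(1 / 4) : ℂ)
      rw [neg_sub] at h2
      have h3 := cpow_upper (u - lam) hul ((1 : ℂ) / 4)
      rw [neg_sub] at h3
      exact tendsto_Fmat hcdown
        (h2.congr fun δ => congrArg (· ^ (-(1 / 4) : ℂ)) (by push_cast; ring))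
        (h3.congr fun δ => congrArg (· ^ ((1 : ℂ) / 4)) (by push_cast; ring))
end

section
/- Let u^c ∈ ℝ and let F be real analytic in a neighborhood of u^c with F'''(u^c) = −k where k > 0. Define, for λ > u^c near u^c, h(λ) = −28 ∫_{u^c}^λ F'''(ξ)(λ − ξ)^{5/2} dξ and f(λ) = h(λ)^{2/7}. Then h(λ) = 8k(λ − u^c)^{7/2} − (16/9) F⁗(u^c)(λ − u^c)^{9/2} + O((λ − u^c)^{11/2}) as λ → u^c+, the function f extends to a real analytic function on a neighborhood of u^c, and f(u^c) = 0, f'(u^c) = (8k)^{2/7}, f''(u^c) = −(64/63) F⁗(u^c) / (8k)^{5/7}. -/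
open Filter Topology Set intervalIntegral Asymptotics MeasureTheory
open scoped NNReal ENNReal

lemma my_analyticAt_log {x : ℝ} (hx : 0 < x) : AnalyticAt ℝ Real.log x := by
  have h2 : AnalyticAt ℝ (fun y : ℝ => Complex.log (Complex.ofRealCLM y)) x :=
    ((analyticAt_clog (Complex.ofReal_mem_slitPlane.2 hx)).restrictScalars).comp
      (Complex.ofRealCLM.analyticAt x)
  have h1 : AnalyticAt ℝ (fun y : ℝ => Complex.reCLM (Complex.log (Complex.ofRealCLM y))) x :=
    (Complex.reCLM.analyticAt _).comp h2
  apply h1.congr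
  filter_upwards [eventually_gt_nhds hx] with y hy
  show (Complex.log (y:ℂ)).re = Real.log y
  rw [← Complex.ofReal_log hy.le, Complex.ofReal_re]

lemma my_cont_rpow {e : ℝ} (he : 0 ≤ e) : Continuous (fun s : ℝ => s ^ e) := by
  rw [continuous_iff_continuousAt]
  exact fun x => Real.continuousAt_rpow_const x e (Or.inr he)

lemma my_int_one_sub (q : ℝ) (hq : 1 ≤ q) :
    ∫ t in (0:ℝ)..1, (1 - t) ^ q = 1 / (q + 1) := by
  have hd : ∀ t : ℝ, HasDerivAt (fun t : ℝ => -(1 - t) ^ (q + 1) / (q + 1)) ((1 - t) ^ q) t := by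
    intro t
    have h1 : HasDerivAt (fun t : ℝ => (1 - t)) (-1) t := by
      simpa using (hasDerivAt_id t).const_sub (1:ℝ)
    have h2 := h1.rpow_const (p := q + 1) (Or.inr (by linarith))
    have h3 := h2.div_const (q + 1)
    have h4 : HasDerivAt (fun x : ℝ => -((1 - x) ^ (q + 1) / (q + 1)))
        (-(-1 * (q + 1) * (1 - t) ^ (q + 1 - 1) / (q + 1))) t := h3.neg
    convert h4 using 1
    · ext t; ring
    · have : q + 1 - 1 = q := by ring
      rw [this]
      field_simp
  have hc : Continuous (fun t : ℝ => (1 - t) ^ q) :=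
    (my_cont_rpow (by linarith)).comp (continuous_const.sub continuous_id)
  rw [intervalIntegral.integral_eq_sub_of_hasDerivAt (fun t _ => hd t)
    (hc.intervalIntegrable 0 1)]
  have hq1 : q + 1 ≠ 0 := by linarith
  norm_num [Real.zero_rpow hq1, Real.one_rpow]
  ring

lemma my_beta0 : ∫ t in (0:ℝ)..1, (1 - t) ^ ((5:ℝ)/2) = 2 / 7 := by
  rw [my_int_one_sub ((5:ℝ)/2) (by norm_num)]; norm_num

lemma my_beta1 : ∫ t in (0:ℝ)..1, t * (1 - t) ^ ((5:ℝ)/2) = 4 / 63 := by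
  have key : ∀ t ∈ Set.uIcc (0:ℝ) 1,
      t * (1 - t) ^ ((5:ℝ)/2) = (1 - t) ^ ((5:ℝ)/2) - (1 - t) ^ ((7:ℝ)/2) := by
    intro t ht
    rw [Set.uIcc_of_le (by norm_num : (0:ℝ) ≤ 1)] at ht
    have h1t : (0:ℝ) ≤ 1 - t := by simp [ht.2]
    have : (1 - t) ^ ((7:ℝ)/2) = (1 - t) ^ ((1:ℝ) + 5/2) := by norm_num
    rw [this, Real.rpow_add' h1t (by norm_num), Real.rpow_one]
    ring
  have i1 : IntervalIntegrable (fun t : ℝ => (1 - t) ^ ((5:ℝ)/2)) MeasureTheory.volume 0 1 :=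
    (((my_cont_rpow (by norm_num)).comp (continuous_const.sub continuous_id))).intervalIntegrable 0 1
  have i2 : IntervalIntegrable (fun t : ℝ => (1 - t) ^ ((7:ℝ)/2)) MeasureTheory.volume 0 1 :=
    (((my_cont_rpow (by norm_num)).comp (continuous_const.sub continuous_id))).intervalIntegrable 0 1
  rw [intervalIntegral.integral_congr key, intervalIntegral.integral_sub i1 i2,
    my_beta0, my_int_one_sub ((7:ℝ)/2) (by norm_num)]
  norm_num

lemma my_beta_abs_le (n : ℕ) : |∫ t in (0:ℝ)..1, t^n * (1-t)^((5:ℝ)/2)| ≤ 1 := by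
  have := intervalIntegral.norm_integral_le_of_norm_le_const (a := (0:ℝ)) (b := 1) (C := 1)
    (f := fun t => t^n * (1-t)^((5:ℝ)/2)) ?_
  · simpa [Real.norm_eq_abs] using this
  · intro t ht
    rw [Set.uIoc_of_le (by norm_num : (0:ℝ) ≤ 1)] at ht
    have ht0 : (0:ℝ) ≤ t := le_of_lt ht.1
    have h1t : (0:ℝ) ≤ 1 - t := by simp [ht.2]
    rw [Real.norm_eq_abs, abs_mul, abs_pow, abs_of_nonneg ht0,
      abs_of_nonneg (Real.rpow_nonneg h1t _)]
    have hp1 := pow_le_one₀ (n := n) ht0 ht.2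
    have h2 := Real.rpow_le_one h1t (by linarith [ht.1] : (1:ℝ) - t ≤ 1) (by norm_num : (0:ℝ) ≤ 5/2)
    nlinarith [pow_nonneg ht0 n, Real.rpow_nonneg h1t ((5:ℝ)/2)]

lemma my_series (uc : ℝ) (b : ℕ → ℝ) (r₀ : ℝ≥0) (hpos : 0 < r₀)
    (hsum : Summable fun n => |b n| * (r₀:ℝ)^n) :
    HasFPowerSeriesOnBall (fun lam => (FormalMultilinearSeries.ofScalars ℝ b).sum (lam - uc))
      (FormalMultilinearSeries.ofScalars ℝ b) uc r₀ := by
  set q := FormalMultilinearSeries.ofScalars ℝ b with hq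
  have hrad : (r₀:ℝ≥0∞) ≤ q.radius := by
    apply FormalMultilinearSeries.le_radius_of_summable_norm
    convert hsum using 2 with n
    rw [FormalMultilinearSeries.ofScalars_norm]
    simp [Real.norm_eq_abs]
  refine ⟨hrad, by exact_mod_cast hpos, ?_⟩
  intro y hy
  have hy' : y ∈ EMetric.ball (0:ℝ) q.radius := lt_of_lt_of_le hy hrad
  simpa using q.hasSum hy'

lemma my_key (uc : ℝ) (φ : ℝ → ℝ) (p : FormalMultilinearSeries ℝ ℝ ℝ) (r : ℝ≥0∞)
    (hr : HasFPowerSeriesOnBall φ p uc r) (r₀ : ℝ≥0) (hr₀ : (r₀:ℝ≥0∞) < r)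
    (lam : ℝ) (hlam1 : uc < lam) (hlam2 : lam - uc < r₀) :
    ∫ ξ in uc..lam, φ ξ * (lam - ξ) ^ ((5:ℝ)/2)
      = (lam - uc) ^ ((7:ℝ)/2) * ∑' n : ℕ, (p.coeff n * (lam - uc)^n) *
          (∫ t in (0:ℝ)..1, t^n * (1-t)^((5:ℝ)/2)) := by
  set s := lam - uc with hsdef
  have hs : 0 < s := by simp [hsdef, hlam1]
  set f₀ : ℝ → ℝ := fun ξ => φ ξ * (lam - ξ) ^ ((5:ℝ)/2) with hf₀
  set g : ℕ → ℝ → ℝ := fun n t => (p.coeff n * s^n) * (t^n * (1-t)^((5:ℝ)/2)) with hg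
  have hA := intervalIntegral.integral_comp_mul_add (a := (0:ℝ)) (b := 1) f₀ (ne_of_gt hs) uc
  have hA' : (∫ ξ in uc..lam, f₀ ξ) = s * ∫ t in (0:ℝ)..1, f₀ (s * t + uc) := by
    rw [hA]
    rw [show s * 0 + uc = uc by ring, show s * 1 + uc = lam by rw [hsdef]; ring]
    rw [smul_eq_mul, ← mul_assoc, mul_inv_cancel₀ (ne_of_gt hs), one_mul]
  have hBC : ∀ t ∈ Set.uIcc (0:ℝ) 1, f₀ (s * t + uc) = s ^ ((5:ℝ)/2) * ∑' n, g n t := by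
    intro t ht
    rw [Set.uIcc_of_le (by norm_num : (0:ℝ) ≤ 1)] at ht
    have h1t : (0:ℝ) ≤ 1 - t := by simp [ht.2]
    have hmem : s * t ∈ Metric.eball (0:ℝ) r := by
      rw [EMetric.mem_ball, edist_dist, dist_zero_right, Real.norm_eq_abs]
      have h1 : |s * t| < (r₀ : ℝ) := by
        rw [abs_mul, abs_of_pos hs, abs_of_nonneg ht.1]
        calc s * t ≤ s * 1 := by nlinarith [ht.2]
        _ = s := by ring
        _ < r₀ := hlam2
      calc ENNReal.ofReal |s * t| < ENNReal.ofReal (r₀:ℝ) :=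
            ENNReal.ofReal_lt_ofReal_iff (lt_of_le_of_lt (abs_nonneg _) h1) |>.2 h1
        _ = (r₀ : ℝ≥0∞) := ENNReal.ofReal_coe_nnreal
        _ < r := hr₀
    have hsum := (hr.hasSum hmem).tsum_eq
    have hφ : φ (uc + s * t) = ∑' n, (s * t)^n * p.coeff n := by
      rw [← hsum]
      exact tsum_congr fun n => by rw [p.apply_eq_pow_smul_coeff, smul_eq_mul]
    have : f₀ (s * t + uc) = φ (uc + s * t) * (s * (1 - t)) ^ ((5:ℝ)/2) := by
      rw [hf₀]
      simp only
      rw [show s * t + uc = uc + s * t by ring, show lam - (uc + s * t) = s * (1 - t) by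
        rw [hsdef]; ring]
    rw [this, Real.mul_rpow hs.le h1t, hφ, ← tsum_mul_right, ← tsum_mul_left]
    exact tsum_congr fun n => by rw [hg]; simp only; rw [mul_pow]; ring
  have hsummable : Summable fun n => ‖p n‖ * (r₀:ℝ)^n :=
    p.summable_norm_mul_pow (lt_of_lt_of_le hr₀ hr.r_le)
  have hcoeff : ∀ n, |p.coeff n| ≤ ‖p n‖ := by
    intro n
    have h1 := (p n).le_opNorm (fun _ => (1:ℝ))
    simp only [norm_one, Finset.prod_const, one_pow, mul_one] at h1
    calc |p.coeff n| = ‖p n (fun _ => (1:ℝ))‖ := by rw [Real.norm_eq_abs]; rfl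
      _ ≤ ‖p n‖ := h1
  have hgcont : ∀ n, Continuous (g n) := by
    intro n
    exact continuous_const.mul ((continuous_pow n).mul
      ((my_cont_rpow (by norm_num)).comp (continuous_const.sub continuous_id)))
  have hgint : ∀ n, Integrable (g n) (volume.restrict (Set.Ioc (0:ℝ) 1)) := fun n =>
    ((hgcont n).integrableOn_Ioc)
  have hgbound : ∀ n, ∀ t ∈ Set.Ioc (0:ℝ) 1, ‖g n t‖ ≤ ‖p n‖ * (r₀:ℝ)^n := by
    intro n t ht
    rw [hg]
    simp only [Real.norm_eq_abs]
    have h1t : (0:ℝ) ≤ 1 - t := by simp [ht.2]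
    have ht0 : (0:ℝ) ≤ t := le_of_lt ht.1
    have habs : |p.coeff n * s^n * (t^n * (1-t)^((5:ℝ)/2))|
        = |p.coeff n| * s^n * (t^n * (1-t)^((5:ℝ)/2)) := by
      rw [abs_mul, abs_mul, abs_pow, abs_of_pos hs, abs_mul, abs_pow, abs_of_nonneg ht0,
        abs_of_nonneg (Real.rpow_nonneg h1t _)]
    rw [habs]
    have h1 : t^n * (1-t)^((5:ℝ)/2) ≤ 1 := by
      have hp1 := pow_le_one₀ (n := n) ht0 ht.2
      have h2 := Real.rpow_le_one h1t (by linarith [ht.1] : (1:ℝ) - t ≤ 1) (by norm_num : (0:ℝ) ≤ 5/2)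
      nlinarith [pow_nonneg ht0 n, Real.rpow_nonneg h1t ((5:ℝ)/2)]
    calc |p.coeff n| * s^n * (t^n * (1-t)^((5:ℝ)/2)) ≤ |p.coeff n| * s^n * 1 := by
          apply mul_le_mul_of_nonneg_left h1
          positivity
      _ = |p.coeff n| * s^n := by ring
      _ ≤ ‖p n‖ * (r₀:ℝ)^n := by
          apply mul_le_mul (hcoeff n) (pow_le_pow_left₀ hs.le hlam2.le n) (by positivity)
            (norm_nonneg _)
  have hnormint : ∀ n, (∫ t in Set.Ioc (0:ℝ) 1, ‖g n t‖) ≤ ‖p n‖ * (r₀:ℝ)^n := by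
    intro n
    have h0 : (∫ t in Set.Ioc (0:ℝ) 1, ‖g n t‖) = ‖∫ t in Set.Ioc (0:ℝ) 1, ‖g n t‖‖ := by
      rw [Real.norm_eq_abs, abs_of_nonneg]
      positivity
    rw [h0]
    have := MeasureTheory.norm_setIntegral_le_of_norm_le_const (μ := volume)
      (s := Set.Ioc (0:ℝ) 1) (C := ‖p n‖ * (r₀:ℝ)^n) (by simp)
      (f := fun t => ‖g n t‖) (fun t ht => by
        rw [norm_norm]; exact hgbound n t ht)
    calc ‖∫ t in Set.Ioc (0:ℝ) 1, ‖g n t‖‖ ≤ (‖p n‖ * (r₀:ℝ)^n) * (volume (Set.Ioc (0:ℝ) 1)).toReal := this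
      _ = ‖p n‖ * (r₀:ℝ)^n := by simp
  have hsumnorm : Summable fun n => ∫ t in Set.Ioc (0:ℝ) 1, ‖g n t‖ :=
    Summable.of_nonneg_of_le (fun n => by positivity) hnormint hsummable
  have hswap := MeasureTheory.integral_tsum_of_summable_integral_norm hgint hsumnorm
  have heach : ∀ n, (∫ t in Set.Ioc (0:ℝ) 1, g n t)
      = (p.coeff n * s^n) * (∫ t in (0:ℝ)..1, t^n * (1-t)^((5:ℝ)/2)) := by
    intro n
    rw [intervalIntegral.integral_of_le (by norm_num : (0:ℝ) ≤ 1), ← MeasureTheory.integral_const_mul]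
  rw [show (∫ ξ in uc..lam, φ ξ * (lam - ξ) ^ ((5:ℝ)/2)) = ∫ ξ in uc..lam, f₀ ξ from rfl, hA',
    intervalIntegral.integral_congr hBC, intervalIntegral.integral_const_mul,
    intervalIntegral.integral_of_le (by norm_num : (0:ℝ) ≤ 1), ← hswap]
  rw [show (∑' n, ∫ t in Set.Ioc (0:ℝ) 1, g n t)
      = ∑' n, (p.coeff n * s^n) * (∫ t in (0:ℝ)..1, t^n * (1-t)^((5:ℝ)/2)) from tsum_congr heach]
  rw [← mul_assoc]
  congr 1
  rw [show (7:ℝ)/2 = 1 + 5/2 by norm_num, Real.rpow_add hs, Real.rpow_one]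


/-- with `F` real analytic near `u^c`, `F'(u^c) = −k`, `k > 0`,
`h(λ) = −28∫_{u^c}^λ F'(ξ)(λ−ξ)^{5/2} dξ` and `f = h^{2/7}`: the expansion
`h(λ) = 8k(λ−u^c)^{7/2} − (16/9)F⁗(u^c)(λ−u^c)^{9/2} + O((λ−u^c)^{11/2})` holds as
`λ → u^c+`, and `f` extends to a real analytic function near `u^c` with
`f(u^c) = 0`, `f'(u^c) = (8k)^{2/7}`, `f''(u^c) = −(64/63) F⁗(u^c)/(8k)^{5/7}`. -/
theorem conformal_map_expansion
    (uc k : ℝ) (hk : 0 < k) (F : ℝ → ℝ)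
    (ε₀ : ℝ) (hε₀ : 0 < ε₀) (hF : AnalyticOnNhd ℝ F (Metric.ball uc ε₀))
    (hF''' : iteratedDeriv 3 F uc = -k)
    (h : ℝ → ℝ)
    (hh : ∀ lam : ℝ, h lam =
      -28 * ∫ ξ in uc..lam, iteratedDeriv 3 F ξ * (lam - ξ) ^ ((5 : ℝ) / 2)) :
    ((fun lam => h lam - 8 * k * (lam - uc) ^ ((7 : ℝ) / 2)
        + (16 / 9) * iteratedDeriv 4 F uc * (lam - uc) ^ ((9 : ℝ) / 2))
      =O[𝓝[>] uc] fun lam => (lam - uc) ^ ((11 : ℝ) / 2)) ∧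
    ∃ δ : ℝ, 0 < δ ∧ ∃ fext : ℝ → ℝ,
      AnalyticOnNhd ℝ fext (Metric.ball uc δ) ∧
      (∀ lam ∈ Set.Ioo uc (uc + δ), fext lam = h lam ^ ((2 : ℝ) / 7)) ∧
      fext uc = 0 ∧
      deriv fext uc = (8 * k) ^ ((2 : ℝ) / 7) ∧
      deriv (deriv fext) uc = -(64 / 63) * iteratedDeriv 4 F uc / (8 * k) ^ ((5 : ℝ) / 7) := by
  -- the third derivative is analytic at uc
  set φ : ℝ → ℝ := iteratedDeriv 3 F with hφdef
  have hφeq : φ = deriv (deriv (deriv F)) := by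
    rw [hφdef]
    simp [iteratedDeriv_succ, iteratedDeriv_zero]
  have hφA : AnalyticOnNhd ℝ φ (Metric.ball uc ε₀) := by
    rw [hφeq]; exact hF.deriv.deriv.deriv
  have hφuc : AnalyticAt ℝ φ uc := hφA uc (Metric.mem_ball_self hε₀)
  obtain ⟨p, r, hr⟩ : ∃ p r, HasFPowerSeriesOnBall φ p uc r := by
    obtain ⟨p, hp⟩ := hφuc
    obtain ⟨r, hrr⟩ := hp
    exact ⟨p, r, hrr⟩
  obtain ⟨r₀, hr₀0, hr₀r⟩ : ∃ r₀ : ℝ≥0, 0 < (r₀:ℝ≥0∞) ∧ (r₀:ℝ≥0∞) < r :=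
    ENNReal.lt_iff_exists_nnreal_btwn.1 hr.r_pos
  have hr₀pos : 0 < r₀ := by exact_mod_cast hr₀0
  have hr₀posR : 0 < (r₀:ℝ) := by exact_mod_cast hr₀pos
  -- coefficients
  have hc0 : p.coeff 0 = -k := by
    rw [← hF''']
    have hz := hr.coeff_zero (fun _ => 0)
    have hveq : (fun _ : Fin 0 => (0:ℝ)) = (1 : Fin 0 → ℝ) := funext fun x => x.elim0
    calc p.coeff 0 = p 0 (fun _ => (0:ℝ)) := by rw [FormalMultilinearSeries.coeff, ← hveq]
      _ = φ uc := hz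
  have hc1 : p.coeff 1 = iteratedDeriv 4 F uc := by
    have hd : deriv φ uc = p 1 fun _ => 1 := hr.hasFPowerSeriesAt.deriv
    have : iteratedDeriv 4 F = deriv φ := by rw [hφdef, iteratedDeriv_succ]
    rw [this, hd]
    rfl
  -- the beta integrals
  set β : ℕ → ℝ := fun n => ∫ t in (0:ℝ)..1, t^n * (1-t)^((5:ℝ)/2) with hβdef
  have hβ0 : β 0 = 2/7 := by
    rw [hβdef]
    simp only [pow_zero, one_mul]
    exact my_beta0
  have hβ1 : β 1 = 4/63 := by
    rw [hβdef]
    simp only [pow_one]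
    exact my_beta1
  -- coefficients of G
  set b : ℕ → ℝ := fun n => -28 * (p.coeff n * β n) with hbdef
  have hb0 : b 0 = 8 * k := by rw [hbdef]; simp only; rw [hc0, hβ0]; ring
  have hb1 : b 1 = -(16/9) * iteratedDeriv 4 F uc := by
    rw [hbdef]; simp only; rw [hc1, hβ1]; ring
  have hcoeff : ∀ n, |p.coeff n| ≤ ‖p n‖ := by
    intro n
    have h1 := (p n).le_opNorm (fun _ => (1:ℝ))
    simp only [norm_one, Finset.prod_const, one_pow, mul_one] at h1
    calc |p.coeff n| = ‖p n (fun _ => (1:ℝ))‖ := by rw [Real.norm_eq_abs]; rfl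
      _ ≤ ‖p n‖ := h1
  have hbsum : Summable fun n => |b n| * (r₀:ℝ)^n := by
    have hs : Summable fun n => 28 * (‖p n‖ * (r₀:ℝ)^n) :=
      (p.summable_norm_mul_pow (lt_of_lt_of_le hr₀r hr.r_le)).mul_left 28
    apply Summable.of_nonneg_of_le (fun n => by positivity) _ hs
    intro n
    rw [hbdef]
    simp only
    rw [abs_mul, abs_mul]
    have : |(-28:ℝ)| = 28 := by norm_num
    rw [this]
    have hle : |p.coeff n| * |β n| ≤ ‖p n‖ * 1 :=
      mul_le_mul (hcoeff n) (my_beta_abs_le n) (abs_nonneg _) (norm_nonneg _)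
    calc 28 * (|p.coeff n| * |β n|) * (r₀:ℝ)^n ≤ 28 * (‖p n‖ * 1) * (r₀:ℝ)^n := by
          apply mul_le_mul_of_nonneg_right (mul_le_mul_of_nonneg_left hle (by norm_num))
          positivity
      _ = 28 * (‖p n‖ * (r₀:ℝ)^n) := by ring
  -- the analytic function G
  set q := FormalMultilinearSeries.ofScalars ℝ b with hqdef
  set G : ℝ → ℝ := fun lam => q.sum (lam - uc) with hGdef
  have hG : HasFPowerSeriesOnBall G q uc r₀ := my_series uc b r₀ hr₀pos hbsum
  have hqcoeff : ∀ (n : ℕ) (y : ℝ), (q n fun _ => y) = b n * y ^ n := by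
    intro n y
    rw [hqdef, FormalMultilinearSeries.ofScalars_apply_eq]
    simp [smul_eq_mul]
  have hGuc : G uc = 8 * k := by
    rw [hGdef]
    simp only [sub_self]
    rw [FormalMultilinearSeries.sum]
    rw [show (∑' n, (q n fun _ => (0:ℝ))) = ∑' n, b n * 0^n from tsum_congr fun n => hqcoeff n 0]
    rw [tsum_eq_single 0 (fun n hn => by simp [zero_pow hn])]
    rw [pow_zero, mul_one, hb0]
  -- the key identity
  have hkey : ∀ lam, uc < lam → lam - uc < (r₀:ℝ) → h lam = (lam - uc)^((7:ℝ)/2) * G lam := by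
    intro lam h1 h2
    rw [hh lam, my_key uc φ p r hr r₀ hr₀r lam h1 h2]
    have hGsum : G lam = ∑' n : ℕ, b n * (lam - uc)^n := by
      rw [hGdef]
      simp only
      rw [FormalMultilinearSeries.sum]
      exact tsum_congr fun n => hqcoeff n (lam - uc)
    rw [hGsum]
    rw [show (∑' n : ℕ, b n * (lam - uc)^n)
        = ∑' n : ℕ, -28 * ((p.coeff n * (lam - uc)^n) * β n) from
      tsum_congr fun n => by rw [hbdef]; simp only; ring]
    rw [tsum_mul_left]
    ring
  -- PART 1 : the big-O statement
  constructor
  · have hO := hG.hasFPowerSeriesAt.isBigO_sub_partialSum_pow 2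
    have hm : Tendsto (fun lam : ℝ => lam - uc) (𝓝[>] uc) (𝓝 0) := by
      have : Tendsto (fun lam : ℝ => lam - uc) (𝓝 uc) (𝓝 (uc - uc)) :=
        (continuous_id.sub continuous_const).tendsto uc
      rw [sub_self] at this
      exact this.mono_left nhdsWithin_le_nhds
    have hOc := hO.comp_tendsto hm
    have hps : ∀ y : ℝ, q.partialSum 2 y = b 0 + b 1 * y := by
      intro y
      rw [FormalMultilinearSeries.partialSum]
      rw [Finset.sum_range_succ, Finset.sum_range_one, hqcoeff, hqcoeff]
      simp
    have hmem : Set.Ioo uc (uc + r₀) ∈ 𝓝[>] uc :=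
      Ioo_mem_nhdsGT_of_mem ⟨le_refl uc, by linarith⟩
    have hOc' : (fun lam : ℝ => G lam - q.partialSum 2 (lam - uc))
        =O[𝓝[>] uc] fun lam => ‖lam - uc‖^2 := by
      apply hOc.congr' _ (EventuallyEq.refl _ _)
      filter_upwards with lam
      simp [Function.comp]
    have hmul : (fun lam : ℝ => (lam - uc)^((7:ℝ)/2) * (G lam - q.partialSum 2 (lam - uc)))
        =O[𝓝[>] uc] fun lam => (lam - uc)^((7:ℝ)/2) * ‖lam - uc‖^2 :=
      (isBigO_refl (fun lam : ℝ => (lam - uc)^((7:ℝ)/2)) _).mul hOc'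
    apply hmul.congr'
    · filter_upwards [hmem] with lam hlam
      have h1 : uc < lam := hlam.1
      have h2 : lam - uc < (r₀:ℝ) := by
        have := hlam.2; linarith
      have hs : 0 < lam - uc := by linarith
      have h92 : (lam - uc)^((9:ℝ)/2) = (lam - uc)^((7:ℝ)/2) * (lam - uc) := by
        rw [show (9:ℝ)/2 = 7/2 + 1 by norm_num, Real.rpow_add hs, Real.rpow_one]
      rw [hkey lam h1 h2, hps, hb0, hb1, h92]
      ring
    · filter_upwards [hmem] with lam hlam
      have hs : 0 < lam - uc := by have := hlam.1; linarith
      rw [Real.norm_eq_abs, abs_of_pos hs, show (11:ℝ)/2 = 7/2 + 2 by norm_num,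
        Real.rpow_add hs, Real.rpow_two]
  -- PART 2 : the analytic extension
  · -- positivity neighborhood for G
    have hGcont : ContinuousAt G uc := hG.analyticAt.continuousAt
    have hev : ∀ᶠ x in 𝓝 uc, 0 < G x := by
      have : Set.Ioi (0:ℝ) ∈ 𝓝 (G uc) := by
        rw [hGuc]
        exact Ioi_mem_nhds (by positivity)
      filter_upwards [hGcont.preimage_mem_nhds this] with x hx
      exact hx
    obtain ⟨δ₂, hδ₂0, hδ₂⟩ := Metric.eventually_nhds_iff_ball.1 hev
    set δ : ℝ := min δ₂ (r₀:ℝ) with hδdef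
    have hδ0 : 0 < δ := lt_min hδ₂0 hr₀posR
    have hballδ : Metric.ball uc δ ⊆ Metric.ball uc δ₂ :=
      Metric.ball_subset_ball (min_le_left _ _)
    have hGpos : ∀ x ∈ Metric.ball uc δ, 0 < G x := fun x hx => hδ₂ x (hballδ hx)
    have hGanal : AnalyticOnNhd ℝ G (Metric.ball uc δ) := by
      intro x hx
      apply hG.analyticAt_of_mem
      rw [EMetric.mem_ball, edist_dist]
      have hd : dist x uc < (r₀:ℝ) := lt_of_lt_of_le (Metric.mem_ball.1 hx) (min_le_right _ _)
      calc ENNReal.ofReal (dist x uc) < ENNReal.ofReal (r₀:ℝ) :=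
            (ENNReal.ofReal_lt_ofReal_iff hr₀posR).2 hd
        _ = (r₀:ℝ≥0∞) := ENNReal.ofReal_coe_nnreal
    -- the extension
    set g1 : ℝ → ℝ := fun lam => Real.exp ((2/7) * Real.log (G lam)) with hg1def
    set fext : ℝ → ℝ := fun lam => (lam - uc) * g1 lam with hfextdef
    have hg1anal : AnalyticOnNhd ℝ g1 (Metric.ball uc δ) := by
      intro x hx
      exact (analyticAt_const.mul ((my_analyticAt_log (hGpos x hx)).comp (hGanal x hx))).rexp
    have hfextanal : AnalyticOnNhd ℝ fext (Metric.ball uc δ) := by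
      intro x hx
      exact ((analyticAt_id.sub analyticAt_const).mul (hg1anal x hx))
    refine ⟨δ, hδ0, fext, hfextanal, ?_, ?_, ?_, ?_⟩
    · -- agreement with h^{2/7}
      intro lam hlam
      have h1 : uc < lam := hlam.1
      have hs : 0 < lam - uc := by linarith
      have hlt : lam - uc < δ := by have := hlam.2; linarith
      have h2 : lam - uc < (r₀:ℝ) := lt_of_lt_of_le hlt (min_le_right _ _)
      have hlamball : lam ∈ Metric.ball uc δ := by
        rw [Metric.mem_ball, Real.dist_eq, abs_of_pos hs]
        have := hlam.2; linarith
      have hGl : 0 < G lam := hGpos lam hlamball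
      rw [hkey lam h1 h2]
      rw [Real.mul_rpow (Real.rpow_nonneg hs.le _) hGl.le]
      have e1 : ((lam - uc)^((7:ℝ)/2))^((2:ℝ)/7) = lam - uc := by
        rw [← Real.rpow_mul hs.le]
        norm_num
      have e2 : (G lam)^((2:ℝ)/7) = g1 lam := by
        rw [hg1def]
        simp only
        rw [Real.rpow_def_of_pos hGl, mul_comm]
      rw [e1, e2]
    · rw [hfextdef]; simp
    · -- first derivative
      have hGderiv : HasDerivAt G (b 1) uc := by
        have hd := hG.hasFPowerSeriesAt.hasDerivAt
        rwa [hqcoeff 1 1, one_pow, mul_one] at hd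
      have hGucpos : 0 < G uc := hGpos uc (Metric.mem_ball_self hδ0)
      have hlog : HasDerivAt (fun lam => Real.log (G lam)) ((G uc)⁻¹ * b 1) uc :=
        (Real.hasDerivAt_log (ne_of_gt hGucpos)).comp uc hGderiv
      have hg1d : HasDerivAt g1
          (Real.exp ((2/7) * Real.log (G uc)) * ((2/7) * ((G uc)⁻¹ * b 1))) uc :=
        (hlog.const_mul ((2:ℝ)/7)).exp
      have hfd : HasDerivAt fext
          (1 * g1 uc + (uc - uc) *
            (Real.exp ((2/7) * Real.log (G uc)) * ((2/7) * ((G uc)⁻¹ * b 1)))) uc :=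
        ((hasDerivAt_id uc).sub_const uc).mul hg1d
      have hd' : deriv fext uc = g1 uc := by rw [hfd.deriv]; ring
      rw [hd', hg1def]
      simp only
      rw [hGuc, Real.rpow_def_of_pos (by positivity : (0:ℝ) < 8*k), mul_comm]
    · -- second derivative
      have hGderiv : HasDerivAt G (b 1) uc := by
        have hd := hG.hasFPowerSeriesAt.hasDerivAt
        rwa [hqcoeff 1 1, one_pow, mul_one] at hd
      have hGucpos : 0 < G uc := hGpos uc (Metric.mem_ball_self hδ0)
      have hlog : HasDerivAt (fun lam => Real.log (G lam)) ((G uc)⁻¹ * b 1) uc :=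
        (Real.hasDerivAt_log (ne_of_gt hGucpos)).comp uc hGderiv
      set D : ℝ := Real.exp ((2/7) * Real.log (G uc)) * ((2/7) * ((G uc)⁻¹ * b 1)) with hDdef
      have hg1d : HasDerivAt g1 D uc := (hlog.const_mul ((2:ℝ)/7)).exp
      have hevd : deriv fext =ᶠ[𝓝 uc] fun lam => g1 lam + (lam - uc) * deriv g1 lam := by
        filter_upwards [Metric.ball_mem_nhds uc hδ0] with x hx
        have hfd' : HasDerivAt fext (1 * g1 x + (x - uc) * deriv g1 x) x :=
          ((hasDerivAt_id x).sub_const uc).mul ((hg1anal x hx).differentiableAt).hasDerivAt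
        rw [hfd'.deriv]
        ring
      rw [hevd.deriv_eq]
      have hdg1anal : AnalyticOnNhd ℝ (deriv g1) (Metric.ball uc δ) := hg1anal.deriv
      have hdg1 : HasDerivAt (deriv g1) (deriv (deriv g1) uc) uc :=
        ((hdg1anal uc (Metric.mem_ball_self hδ0)).differentiableAt).hasDerivAt
      have hsum2 : HasDerivAt (fun lam => g1 lam + (lam - uc) * deriv g1 lam)
          (D + (1 * deriv g1 uc + (uc - uc) * deriv (deriv g1) uc)) uc :=
        hg1d.add (((hasDerivAt_id uc).sub_const uc).mul hdg1)
      rw [hsum2.deriv, hg1d.deriv]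
      have hDval : D = (8*k)^((2:ℝ)/7) * ((2/7) * ((8*k)⁻¹ * b 1)) := by
        rw [hDdef, hGuc, Real.rpow_def_of_pos (by positivity : (0:ℝ) < 8*k), mul_comm (Real.log (8*k))]
      have hpq : (8*k)^((5:ℝ)/7) * (8*k)^((2:ℝ)/7) = 8*k := by
        rw [← Real.rpow_add (by positivity : (0:ℝ) < 8*k)]
        norm_num
      have h57pos : 0 < (8*k)^((5:ℝ)/7) := Real.rpow_pos_of_pos (by positivity) _
      have h8k : (8:ℝ)*k ≠ 0 := by positivity
      have hQP : (8*k)^((2:ℝ)/7) * (8*k)⁻¹ = ((8*k)^((5:ℝ)/7))⁻¹ := by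
        field_simp
        linarith [hpq]
      have hQQ : (8*k)^((2:ℝ)/7) * (8*k)⁻¹ * (8*k)^((5:ℝ)/7) = 1 := by
        rw [hQP]
        exact inv_mul_cancel₀ (ne_of_gt h57pos)
      rw [hDval, hb1, eq_div_iff (ne_of_gt h57pos)]
      linear_combination (-(64:ℝ)/63 * iteratedDeriv 4 F uc) * hQQ
end
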